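/- arXiv:1205.1960 — 4 statements merged into one kernel-verified Lean document; each statement's English description precedes it below -/
import Mathlib

section
/- Let A be an n×n row-stochastic matrix with nonnegative entries, let 0 < c < 1, let f be a vector with nonnegative coordinates satisfying Aᵀf = f and ‖f‖₁ = 1, and let v be a vector with nonnegative coordinates satisfying ‖v‖₁ = 1. If π satisfies (cAᵀ + (1-c)v𝟏ᵀ)π = π with ‖π‖₁ = 1 and nonnegative coordinates, then ((1-c)/(1+c))·‖v - f‖₁ ≤ ‖π - f‖₁ ≤ ‖v - f‖₁. -/
/-!
Subtracting the stationarity equation `f = Aᵀf` from the PageRank equation gives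
`π - f = c Aᵀ(π - f) + (1 - c)(v - f)`. Since `Aᵀ` is a contraction of `ℓ¹`, the triangle
inequality applied to this identity, once as it stands and once solved for `(1 - c)(v - f)`,
yields both bounds.
-/

open Finset Matrix

section Normed

variable {E : Type*} [SeminormedAddCommGroup E] [NormedSpace ℝ E]

theorem norm_le_of_eq_smul_add_one_sub_smul {c : ℝ} {d u e : E} (hu : ‖u‖ ≤ ‖d‖)
    (hc0 : 0 ≤ c) (hc1 : c < 1) (hd : d = c • u + (1 - c) • e) : ‖d‖ ≤ ‖e‖ := by
  have h : ‖d‖ ≤ c * ‖d‖ + (1 - c) * ‖e‖ :=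
    calc ‖d‖ ≤ ‖c • u‖ + ‖(1 - c) • e‖ := hd ▸ norm_add_le _ _
      _ = c * ‖u‖ + (1 - c) * ‖e‖ := by
        rw [norm_smul_of_nonneg hc0, norm_smul_of_nonneg (by linarith)]
      _ ≤ c * ‖d‖ + (1 - c) * ‖e‖ := by gcongr
  nlinarith

theorem one_sub_mul_norm_le_of_eq_smul_add_one_sub_smul {c : ℝ} {d u e : E} (hu : ‖u‖ ≤ ‖d‖)
    (hc0 : 0 ≤ c) (hd : d = c • u + (1 - c) • e) : (1 - c) * ‖e‖ ≤ (1 + c) * ‖d‖ :=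
  calc (1 - c) * ‖e‖ ≤ ‖(1 - c) • e‖ := by
        rw [norm_smul, Real.norm_eq_abs]
        exact mul_le_mul_of_nonneg_right (le_abs_self _) (norm_nonneg _)
    _ = ‖d - c • u‖ := by rw [hd, add_sub_cancel_left]
    _ ≤ ‖d‖ + c * ‖u‖ := by
        rw [← norm_smul_of_nonneg hc0]
        exact norm_sub_le _ _
    _ ≤ (1 + c) * ‖d‖ := by nlinarith

end Normed

section Stochastic

variable {m n : Type*} [Fintype m] [Fintype n]

theorem sum_abs_transpose_mulVec_le {A : Matrix m n ℝ} (hA_nonneg : ∀ i j, 0 ≤ A i j)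
    (hA_row : ∀ i, ∑ j, A i j = 1) (x : m → ℝ) :
    ∑ j, |(Aᵀ *ᵥ x) j| ≤ ∑ i, |x i| :=
  calc ∑ j, |(Aᵀ *ᵥ x) j| ≤ ∑ j, ∑ i, |A i j * x i| :=
        sum_le_sum fun j _ => abs_sum_le_sum_abs _ _
    _ = ∑ i, (∑ j, A i j) * |x i| := by
        rw [sum_comm]
        simp only [abs_mul, abs_of_nonneg (hA_nonneg _ _), sum_mul]
    _ = ∑ i, |x i| := by simp only [hA_row, one_mul]

theorem pagerank_sub_stationary {A : Matrix n n ℝ} {c : ℝ} {f v π : n → ℝ}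
    (hf_fix : Aᵀ *ᵥ f = f) (hπ_sum : ∑ i, π i = 1)
    (hπ_fix : (c • Aᵀ + (1 - c) • vecMulVec v 1) *ᵥ π = π) :
    π - f = c • (Aᵀ *ᵥ (π - f)) + (1 - c) • (v - f) := by
  have h1 : (1 : n → ℝ) ⬝ᵥ π = 1 := by simpa [dotProduct] using hπ_sum
  rw [add_mulVec, smul_mulVec, smul_mulVec, vecMulVec_mulVec, h1] at hπ_fix
  rw [mulVec_sub, hf_fix]
  ext i
  have := congrFun hπ_fix i
  simp only [Pi.add_apply, Pi.smul_apply, Pi.sub_apply, smul_eq_mul, MulOpposite.op_one, one_smul] at this ⊢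
  linarith

end Stochastic

theorem pagerank_degree_distance_bounds_general {n : ℕ}
    (A : Matrix (Fin n) (Fin n) ℝ)
    (hA_nonneg : ∀ i j, 0 ≤ A i j) (hA_row : ∀ i, ∑ j, A i j = 1)
    (c : ℝ) (hc0 : 0 < c) (hc1 : c < 1)
    (f : Fin n → ℝ)
    (hf_fix : Aᵀ *ᵥ f = f)
    (v : Fin n → ℝ)
    (π : Fin n → ℝ) (hπ_nonneg : ∀ i, 0 ≤ π i) (hπ_norm : ∑ i, |π i| = 1)
    (hπ_fix : (c • Aᵀ + (1 - c) • Matrix.vecMulVec v 1) *ᵥ π = π) :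
    ((1 - c) / (1 + c)) * (∑ i, |v i - f i|) ≤ ∑ i, |π i - f i| ∧
      ∑ i, |π i - f i| ≤ ∑ i, |v i - f i| := by
  have hπ_sum : ∑ i, π i = 1 := by simpa only [abs_of_nonneg (hπ_nonneg _)] using hπ_norm
  have l1_norm (x : Fin n → ℝ) : ‖WithLp.toLp 1 x‖ = ∑ i, |x i| := by
    simp [PiLp.norm_eq_of_L1]
  have hd := congrArg (WithLp.toLp 1) (pagerank_sub_stationary hf_fix hπ_sum hπ_fix)
  rw [WithLp.toLp_add, WithLp.toLp_smul, WithLp.toLp_smul] at hd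
  have hu := sum_abs_transpose_mulVec_le hA_nonneg hA_row (π - f)
  rw [← l1_norm, ← l1_norm] at hu
  have hupper := norm_le_of_eq_smul_add_one_sub_smul hu hc0.le hc1 hd
  have hlower := one_sub_mul_norm_le_of_eq_smul_add_one_sub_smul hu hc0.le hd
  simp only [l1_norm, Pi.sub_apply] at hupper hlower
  refine ⟨?_, hupper⟩
  rw [div_mul_eq_mul_div, div_le_iff₀ (by linarith)]
  linarith

/-- For a row-stochastic matrix `A`, damping constant `0 < c < 1`, stationary vector `f`
(`Aᵀf = f`, nonnegative, `‖f‖₁ = 1`), personalization vector `v` (nonnegative, `‖v‖₁ = 1`),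
and PageRank vector `π` (nonnegative, `‖π‖₁ = 1`, fixed by `cAᵀ + (1-c)v𝟏ᵀ`), we have
`((1-c)/(1+c))‖v - f‖₁ ≤ ‖π - f‖₁ ≤ ‖v - f‖₁`. -/
theorem pagerank_degree_distance_bounds {n : ℕ}
    (A : Matrix (Fin n) (Fin n) ℝ)
    (hA_nonneg : ∀ i j, 0 ≤ A i j) (hA_row : ∀ i, ∑ j, A i j = 1)
    (c : ℝ) (hc0 : 0 < c) (hc1 : c < 1)
    (f : Fin n → ℝ) (hf_nonneg : ∀ i, 0 ≤ f i)
    (hf_fix : Aᵀ *ᵥ f = f) (hf_norm : ∑ i, |f i| = 1)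
    (v : Fin n → ℝ) (hv_nonneg : ∀ i, 0 ≤ v i) (hv_norm : ∑ i, |v i| = 1)
    (π : Fin n → ℝ) (hπ_nonneg : ∀ i, 0 ≤ π i) (hπ_norm : ∑ i, |π i| = 1)
    (hπ_fix : (c • Aᵀ + (1 - c) • Matrix.vecMulVec v 1) *ᵥ π = π) :
    ((1 - c) / (1 + c)) * (∑ i, |v i - f i|) ≤ ∑ i, |π i - f i| ∧
      ∑ i, |π i - f i| ≤ ∑ i, |v i - f i| :=
  pagerank_degree_distance_bounds_general A hA_nonneg hA_row c hc0 hc1 f hf_fix v π hπ_nonneg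
    hπ_norm hπ_fix
end

section
/- Let A be an n×n row-stochastic matrix, let 0 < c < 1, and let v be a vector with nonnegative coordinates satisfying 𝟏ᵀv = 1. If π is a vector with ‖π‖₁ = 1 and nonnegative coordinates satisfying (cAᵀ + (1-c)v𝟏ᵀ)π = π, then π = (1-c)(I - cAᵀ)⁻¹v. -/
/-!
Since `∑ i, π i = 1`, the rank-one term `v 𝟏ᵀ π` equals `v`, so the fixed-point equation reads
`(I - cAᵀ) π = (1 - c) v`. For row-stochastic `A` and `0 ≤ c < 1` the matrix `I - cA` is strictly
diagonally dominant, so by Gershgorin's theorem it is invertible, and so is its transpose `I - cAᵀ`.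
-/

open Finset Matrix

namespace Matrix

variable {ι : Type*} [Fintype ι] [DecidableEq ι]

-- Strict diagonal dominance: off the diagonal, row `k` sums to `c * (1 - A k k) < 1 - c * A k k`.
theorem det_one_sub_smul_ne_zero_of_mem_rowStochastic {A : Matrix ι ι ℝ}
    (hA : A ∈ rowStochastic ℝ ι) {c : ℝ} (hc0 : 0 ≤ c) (hc1 : c < 1) :
    (1 - c • A).det ≠ 0 := by
  refine det_ne_zero_of_sum_row_lt_diag fun k => ?_
  have hAkk : A k k ≤ 1 := le_one_of_mem_rowStochastic hA
  have hoff : ∑ j ∈ univ.erase k, A k j = 1 - A k k := by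
    rw [← sum_row_of_mem_rowStochastic hA k, ← add_sum_erase _ _ (mem_univ k), add_sub_cancel_left]
  calc ∑ j ∈ univ.erase k, ‖(1 - c • A) k j‖
      = c * ∑ j ∈ univ.erase k, A k j := by
        rw [mul_sum]
        refine sum_congr rfl fun j hj => ?_
        rw [sub_apply, one_apply_ne (ne_of_mem_erase hj).symm, smul_apply, smul_eq_mul, zero_sub,
          norm_neg, Real.norm_of_nonneg (mul_nonneg hc0 (nonneg_of_mem_rowStochastic hA))]
    _ < 1 - c * A k k := by rw [hoff]; linarith
    _ = ‖(1 - c • A) k k‖ := by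
        rw [sub_apply, one_apply_eq, smul_apply, smul_eq_mul, Real.norm_of_nonneg]
        nlinarith

theorem isUnit_det_one_sub_smul_transpose {A : Matrix ι ι ℝ}
    (hA : A ∈ rowStochastic ℝ ι) {c : ℝ} (hc0 : 0 ≤ c) (hc1 : c < 1) :
    IsUnit (1 - c • Aᵀ).det := by
  rw [← transpose_one, ← transpose_smul, ← transpose_sub, det_transpose]
  exact (det_one_sub_smul_ne_zero_of_mem_rowStochastic hA hc0 hc1).isUnit

theorem one_sub_smul_mulVec_eq_of_mulVec_eq_self {R : Type*} [CommRing R] {M : Matrix ι ι R}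
    {c : R} {v x : ι → R} (hx : ∑ i, x i = 1)
    (hfix : (c • M + (1 - c) • vecMulVec v 1) *ᵥ x = x) :
    (1 - c • M) *ᵥ x = (1 - c) • v := by
  rw [add_mulVec, smul_mulVec, smul_mulVec, vecMulVec_mulVec, one_dotProduct, hx] at hfix
  rw [sub_mulVec, one_mulVec, smul_mulVec]
  simpa [sub_eq_iff_eq_add'] using hfix.symm

end Matrix

theorem pagerank_eq_resolvent_formula_general {n : ℕ}
    (A : Matrix (Fin n) (Fin n) ℝ)
    (hA_nonneg : ∀ i j, 0 ≤ A i j) (hA_row : ∀ i, ∑ j, A i j = 1)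
    (c : ℝ) (hc0 : 0 < c) (hc1 : c < 1)
    (v : Fin n → ℝ)
    (π : Fin n → ℝ) (hπ_nonneg : ∀ i, 0 ≤ π i) (hπ_norm : ∑ i, |π i| = 1)
    (hπ_fix : (c • Aᵀ + (1 - c) • Matrix.vecMulVec v 1) *ᵥ π = π) :
    π = (1 - c) • (((1 : Matrix (Fin n) (Fin n) ℝ) - c • Aᵀ)⁻¹ *ᵥ v) := by
  have hA : A ∈ rowStochastic ℝ (Fin n) := mem_rowStochastic_iff_sum.2 ⟨hA_nonneg, hA_row⟩
  have hπ_sum : ∑ i, π i = 1 := by simpa only [abs_of_nonneg (hπ_nonneg _)] using hπ_norm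
  have hdet := isUnit_det_one_sub_smul_transpose hA hc0.le hc1
  rw [← mulVec_smul, ← one_sub_smul_mulVec_eq_of_mulVec_eq_self hπ_sum hπ_fix, mulVec_mulVec,
    nonsing_inv_mul _ hdet, one_mulVec]

/-- The PageRank vector `π` satisfies `π = (1-c)(I - cAᵀ)⁻¹ v`. -/
theorem pagerank_eq_resolvent_formula {n : ℕ}
    (A : Matrix (Fin n) (Fin n) ℝ)
    (hA_nonneg : ∀ i j, 0 ≤ A i j) (hA_row : ∀ i, ∑ j, A i j = 1)
    (c : ℝ) (hc0 : 0 < c) (hc1 : c < 1)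
    (v : Fin n → ℝ) (hv_nonneg : ∀ i, 0 ≤ v i) (hv_sum : ∑ i, v i = 1)
    (π : Fin n → ℝ) (hπ_nonneg : ∀ i, 0 ≤ π i) (hπ_norm : ∑ i, |π i| = 1)
    (hπ_fix : (c • Aᵀ + (1 - c) • Matrix.vecMulVec v 1) *ᵥ π = π) :
    π = (1 - c) • (((1 : Matrix (Fin n) (Fin n) ℝ) - c • Aᵀ)⁻¹ *ᵥ v) :=
  pagerank_eq_resolvent_formula_general A hA_nonneg hA_row c hc0 hc1 v π hπ_nonneg hπ_norm hπ_fix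
end

section
/- Let A be an n×n row-stochastic matrix, let 0 < c < 1, let f satisfy Aᵀf = f with ‖f‖₁ = 1 and nonnegative coordinates, and let v be a vector with nonnegative coordinates and 𝟏ᵀv = 1. If π is the PageRank vector, i.e., π has nonnegative coordinates, ‖π‖₁ = 1 and (cAᵀ + (1-c)v𝟏ᵀ)π = π, then π - f = (1-c)(I - cAᵀ)⁻¹(v - f). -/
/-!
Multiplying the PageRank equation out, using `𝟏ᵀπ = 1`, gives `(I - cAᵀ)π = (1 - c)v`, while the
stationarity of `f` gives `(I - cAᵀ)f = (1 - c)f`. Subtracting, `(I - cAᵀ)(π - f) = (1 - c)(v - f)`,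
and `I - cAᵀ` is invertible because `I - cA` is strictly diagonally dominant.
-/

open Finset Matrix

variable {ι : Type*} [Fintype ι]

theorem Matrix.vecMulVec_one_mulVec {R : Type*} [CommSemiring R] (v x : ι → R) :
    vecMulVec v 1 *ᵥ x = (∑ i, x i) • v := by
  rw [vecMulVec_mulVec, one_dotProduct, op_smul_eq_smul]

variable [DecidableEq ι]

theorem Matrix.det_one_sub_smul_ne_zero_of_substochastic (A : Matrix ι ι ℝ)
    (hA_nonneg : ∀ i j, 0 ≤ A i j) (hA_row : ∀ i, ∑ j, A i j ≤ 1)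
    {c : ℝ} (hc0 : 0 ≤ c) (hc1 : c < 1) :
    (1 - c • A).det ≠ 0 := by
  refine det_ne_zero_of_sum_row_lt_diag fun k => ?_
  have hAkk : A k k ≤ 1 :=
    (single_le_sum (fun j _ => hA_nonneg k j) (mem_univ k)).trans (hA_row k)
  have hdiag : ‖(1 - c • A) k k‖ = 1 - c * A k k := by
    simp only [sub_apply, one_apply_eq, smul_apply, smul_eq_mul, Real.norm_eq_abs]
    exact abs_of_nonneg (by nlinarith)
  have hoff : ∑ j ∈ univ.erase k, ‖(1 - c • A) k j‖ = c * (∑ j, A k j - A k k) := by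
    rw [← sum_erase_eq_sub (mem_univ k), mul_sum]
    refine sum_congr rfl fun j hj => ?_
    simp [one_apply_ne' (ne_of_mem_erase hj), abs_of_nonneg hc0, abs_of_nonneg (hA_nonneg k j)]
  rw [hdiag, hoff]
  nlinarith [hA_row k]

theorem Matrix.one_sub_smul_mulVec_eq_of_pagerank {R : Type*} [CommRing R]
    (B : Matrix ι ι R) (c : R) (v π : ι → R) (hπ_sum : ∑ i, π i = 1)
    (hπ_fix : (c • B + (1 - c) • vecMulVec v 1) *ᵥ π = π) :
    (1 - c • B) *ᵥ π = (1 - c) • v := by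
  rw [add_mulVec, smul_mulVec, smul_mulVec, vecMulVec_one_mulVec, hπ_sum, one_smul] at hπ_fix
  rw [sub_mulVec, one_mulVec, smul_mulVec]
  nth_rewrite 1 [← hπ_fix]
  abel

theorem Matrix.one_sub_smul_mulVec_eq_of_mulVec_eq {R : Type*} [CommRing R]
    (B : Matrix ι ι R) (c : R) {f : ι → R}
    (hf_fix : B *ᵥ f = f) :
    (1 - c • B) *ᵥ f = (1 - c) • f := by
  rw [sub_mulVec, one_mulVec, smul_mulVec, hf_fix, sub_smul, one_smul]

theorem pagerank_sub_degree_eq_resolvent_general {n : ℕ}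
    (A : Matrix (Fin n) (Fin n) ℝ)
    (hA_nonneg : ∀ i j, 0 ≤ A i j) (hA_row : ∀ i, ∑ j, A i j = 1)
    (c : ℝ) (hc0 : 0 < c) (hc1 : c < 1)
    (f : Fin n → ℝ)
    (hf_fix : Aᵀ *ᵥ f = f)
    (v : Fin n → ℝ)
    (π : Fin n → ℝ) (hπ_nonneg : ∀ i, 0 ≤ π i) (hπ_norm : ∑ i, |π i| = 1)
    (hπ_fix : (c • Aᵀ + (1 - c) • Matrix.vecMulVec v 1) *ᵥ π = π) :
    π - f = (1 - c) • (((1 : Matrix (Fin n) (Fin n) ℝ) - c • Aᵀ)⁻¹ *ᵥ (v - f)) := by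
  set M : Matrix (Fin n) (Fin n) ℝ := 1 - c • Aᵀ
  have hdet : M.det ≠ 0 := by
    rw [show M = (1 - c • A)ᵀ by simp [M], det_transpose]
    exact A.det_one_sub_smul_ne_zero_of_substochastic hA_nonneg (fun i => (hA_row i).le)
      hc0.le hc1
  have hπ_sum : ∑ i, π i = 1 := by
    rw [← hπ_norm]
    exact sum_congr rfl fun i _ => (abs_of_nonneg (hπ_nonneg i)).symm
  have hM : M *ᵥ (π - f) = (1 - c) • (v - f) := by
    rw [mulVec_sub, one_sub_smul_mulVec_eq_of_pagerank _ _ _ _ hπ_sum hπ_fix,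
      one_sub_smul_mulVec_eq_of_mulVec_eq _ _ hf_fix, smul_sub]
  let := invertibleOfIsUnitDet M (isUnit_iff_ne_zero.2 hdet)
  rw [← mulVec_smul, inv_mulVec_eq_vec hM.symm]

/-- The difference of the PageRank vector and the stationary vector satisfies
`π - f = (1-c)(I - cAᵀ)⁻¹(v - f)`. -/
theorem pagerank_sub_degree_eq_resolvent {n : ℕ}
    (A : Matrix (Fin n) (Fin n) ℝ)
    (hA_nonneg : ∀ i j, 0 ≤ A i j) (hA_row : ∀ i, ∑ j, A i j = 1)
    (c : ℝ) (hc0 : 0 < c) (hc1 : c < 1)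
    (f : Fin n → ℝ) (hf_nonneg : ∀ i, 0 ≤ f i)
    (hf_fix : Aᵀ *ᵥ f = f) (hf_norm : ∑ i, |f i| = 1)
    (v : Fin n → ℝ) (hv_nonneg : ∀ i, 0 ≤ v i) (hv_sum : ∑ i, v i = 1)
    (π : Fin n → ℝ) (hπ_nonneg : ∀ i, 0 ≤ π i) (hπ_norm : ∑ i, |π i| = 1)
    (hπ_fix : (c • Aᵀ + (1 - c) • Matrix.vecMulVec v 1) *ᵥ π = π) :
    π - f = (1 - c) • (((1 : Matrix (Fin n) (Fin n) ℝ) - c • Aᵀ)⁻¹ *ᵥ (v - f)) :=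
  pagerank_sub_degree_eq_resolvent_general A hA_nonneg hA_row c hc0 hc1 f hf_fix v π hπ_nonneg
    hπ_norm hπ_fix
end

section
/- Let A be an n×n row-stochastic matrix, let 0 < c < 1, let f satisfy Aᵀf = f with ‖f‖₁ = 1 and nonnegative coordinates, let v be a vector with nonnegative coordinates and 𝟏ᵀv = 1, and let π be the PageRank vector: π has nonnegative coordinates, ‖π‖₁ = 1 and (cAᵀ + (1-c)v𝟏ᵀ)π = π. Then π = f if and only if v = f. -/
/-!
The PageRank map is `x ↦ c Aᵀx + (1 - c) v 𝟏ᵀx`. Since `Aᵀ` is column-stochastic it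
does not increase `∑ |xᵢ|`, so `x = c Aᵀx` forces `x = 0` when `0 < c < 1`. On a probability
vector `π` the map is `c Aᵀπ + (1 - c) v`. If `π = f`, then `Aᵀf = f` leaves
`(1 - c) v = (1 - c) f`. If `v = f`, then `f` is a fixed point too, and `π - f = c Aᵀ(π - f)`
forces `π = f`.
-/

open Finset Matrix

namespace Matrix

variable {n : Type*} [Fintype n]

lemma vecMulVec_one_mulVec_s8 {R : Type*} [CommSemiring R] (v π : n → R) :
    vecMulVec v 1 *ᵥ π = (∑ i, π i) • v := by
  rw [vecMulVec_mulVec, one_dotProduct, op_smul_eq_smul]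

variable [DecidableEq n] {M : Matrix n n ℝ}

lemma abs_mulVec_le_mulVec_abs (hM : M ∈ colStochastic ℝ n) (x : n → ℝ) (i : n) :
    |(M *ᵥ x) i| ≤ (M *ᵥ fun j => |x j|) i :=
  calc |(M *ᵥ x) i| ≤ ∑ j, |M i j * x j| := abs_sum_le_sum_abs _ _
    _ = (M *ᵥ fun j => |x j|) i := by
      refine sum_congr rfl fun j _ => ?_
      rw [abs_mul, abs_of_nonneg (nonneg_of_mem_colStochastic hM)]

lemma sum_abs_mulVec_le_of_mem_colStochastic (hM : M ∈ colStochastic ℝ n) (x : n → ℝ) :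
    ∑ i, |(M *ᵥ x) i| ≤ ∑ i, |x i| :=
  calc ∑ i, |(M *ᵥ x) i| ≤ ∑ i, (M *ᵥ fun j => |x j|) i :=
        sum_le_sum fun i _ => abs_mulVec_le_mulVec_abs hM x i
    _ = ∑ i, |x i| := sum_mulVec_of_mem_colStochastic hM

lemma eq_zero_of_eq_smul_mulVec_of_mem_colStochastic (hM : M ∈ colStochastic ℝ n) {c : ℝ}
    (hc : |c| < 1) {x : n → ℝ} (hx : x = c • M *ᵥ x) : x = 0 := by
  have hle : ∑ i, |x i| ≤ |c| * ∑ i, |x i| :=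
    calc ∑ i, |x i| = |c| * ∑ i, |(M *ᵥ x) i| := by
          conv_lhs => rw [hx]
          simp only [Pi.smul_apply, smul_eq_mul, abs_mul, mul_sum]
      _ ≤ |c| * ∑ i, |x i| :=
          mul_le_mul_of_nonneg_left (sum_abs_mulVec_le_of_mem_colStochastic hM x) (abs_nonneg c)
  have hzero : ∑ i, |x i| = 0 := by
    nlinarith [sum_nonneg fun i (_ : i ∈ univ) => abs_nonneg (x i)]
  have habs := (sum_eq_zero_iff_of_nonneg fun j _ => abs_nonneg (x j)).1 hzero
  funext i
  exact abs_eq_zero.1 (habs i (mem_univ i))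

end Matrix

theorem pagerank_eq_degree_iff_personalization_eq_general {n : ℕ}
    (A : Matrix (Fin n) (Fin n) ℝ)
    (hA_nonneg : ∀ i j, 0 ≤ A i j) (hA_row : ∀ i, ∑ j, A i j = 1)
    (c : ℝ) (hc0 : 0 < c) (hc1 : c < 1)
    (f : Fin n → ℝ)
    (hf_fix : Aᵀ *ᵥ f = f)
    (v : Fin n → ℝ)
    (π : Fin n → ℝ) (hπ_nonneg : ∀ i, 0 ≤ π i) (hπ_norm : ∑ i, |π i| = 1)
    (hπ_fix : (c • Aᵀ + (1 - c) • Matrix.vecMulVec v 1) *ᵥ π = π) :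
    π = f ↔ v = f := by
  have hπ_sum : ∑ i, π i = 1 := by
    rw [← hπ_norm]
    exact sum_congr rfl fun i _ => (abs_of_nonneg (hπ_nonneg i)).symm
  have hA_col : Aᵀ ∈ colStochastic ℝ (Fin n) :=
    transpose_mem_colStochastic_iff_mem_rowStochastic.2
      (mem_rowStochastic_iff_sum.2 ⟨hA_nonneg, hA_row⟩)
  have hπ : c • Aᵀ *ᵥ π + (1 - c) • v = π := by
    rwa [add_mulVec, smul_mulVec, smul_mulVec, vecMulVec_one_mulVec_s8, hπ_sum, one_smul] at hπ_fix
  constructor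
  · rintro rfl
    rw [hf_fix] at hπ
    have hv : (1 - c) • v = (1 - c) • π := by linear_combination (norm := module) hπ
    exact smul_right_injective _ (sub_ne_zero.2 hc1.ne') hv
  · rintro rfl
    have hdiff : π - v = c • Aᵀ *ᵥ (π - v) := by
      rw [mulVec_sub, hf_fix]
      linear_combination (norm := module) -hπ
    exact sub_eq_zero.1 <| eq_zero_of_eq_smul_mulVec_of_mem_colStochastic hA_col
      (abs_lt.2 ⟨by linarith, hc1⟩) hdiff

/-- The PageRank vector `π` equals the stationary vector `f` if and only if the
personalization vector `v` equals `f`. -/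
theorem pagerank_eq_degree_iff_personalization_eq {n : ℕ}
    (A : Matrix (Fin n) (Fin n) ℝ)
    (hA_nonneg : ∀ i j, 0 ≤ A i j) (hA_row : ∀ i, ∑ j, A i j = 1)
    (c : ℝ) (hc0 : 0 < c) (hc1 : c < 1)
    (f : Fin n → ℝ) (hf_nonneg : ∀ i, 0 ≤ f i)
    (hf_fix : Aᵀ *ᵥ f = f) (hf_norm : ∑ i, |f i| = 1)
    (v : Fin n → ℝ) (hv_nonneg : ∀ i, 0 ≤ v i) (hv_sum : ∑ i, v i = 1)
    (π : Fin n → ℝ) (hπ_nonneg : ∀ i, 0 ≤ π i) (hπ_norm : ∑ i, |π i| = 1)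
    (hπ_fix : (c • Aᵀ + (1 - c) • Matrix.vecMulVec v 1) *ᵥ π = π) :
    π = f ↔ v = f :=
  pagerank_eq_degree_iff_personalization_eq_general A hA_nonneg hA_row c hc0 hc1 f hf_fix v π
    hπ_nonneg hπ_norm hπ_fix
end
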